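/- The error function r ↦ ε(r) giving the optimal-threshold TARP error for the equal-covariance Gaussian two-class problem is continuous on ℝ^p \ {0}, and attains its minimum (the Bayes error) at r = Σ^{-1}(μ₂ − μ₁) (up to positive scaling). Consequently, if r_n → Σ^{-1}(μ₂−μ₁), then ε(r_n) → Bayes error. -/

import Mathlib

open Filter MeasureTheory
open scoped RealInnerProductSpace

/-! With `Φ = stdNormalCDF`, `ε(r) = Φ(-|⟪r, d⟫| / (2‖r‖))` is `Φ` composed with a function
that is continuous away from `0`, and by Cauchy–Schwarz `|⟪r, d⟫| / ‖r‖ ≤ ‖d‖` with equality at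
`r = d`. Since `Φ` is continuous and monotone, `ε` is continuous on `{0}ᶜ` and minimal at `d`, and
the limit statement is continuity at `d ≠ 0`. -/

/-- The standard normal cumulative distribution function. -/
noncomputable def stdNormalCDF (x : ℝ) : ℝ :=
  (Real.sqrt (2 * Real.pi))⁻¹ * ∫ t in Set.Iic x, Real.exp (-t ^ 2 / 2)

lemma integrable_exp_neg_sq_div_two : Integrable fun t : ℝ => Real.exp (-t ^ 2 / 2) := by
  convert integrable_exp_neg_mul_sq (b := 1 / 2) one_half_pos using 2 with t
  ring_nf

lemma continuous_stdNormalCDF : Continuous stdNormalCDF := by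
  refine continuous_iff_continuousAt.2 fun x => continuousAt_const.mul ?_
  have hprim := (integrable_exp_neg_sq_div_two.integrableOn
    (s := Set.Iic (x + 1))).continuousOn_Iic_primitive_Iic
  exact hprim.continuousAt (Iic_mem_nhds (lt_add_one x))

lemma monotone_stdNormalCDF : Monotone stdNormalCDF := fun x y hxy => by
  refine mul_le_mul_of_nonneg_left ?_ (inv_nonneg.2 (Real.sqrt_nonneg _))
  exact setIntegral_mono_set integrable_exp_neg_sq_div_two.integrableOn
    (.of_forall fun t => (Real.exp_pos _).le) (Set.Iic_subset_Iic.2 hxy).eventuallyLE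

section InnerProductSpace

variable {E : Type*} [NormedAddCommGroup E] [InnerProductSpace ℝ E]

lemma continuousOn_neg_abs_inner_div_two_mul_norm (d : E) :
    ContinuousOn (fun r : E => -|⟪r, d⟫| / (2 * ‖r‖)) {0}ᶜ := by
  refine ContinuousOn.div (by fun_prop) (by fun_prop) fun r hr => ?_
  have : 0 < ‖r‖ := norm_pos_iff.2 hr
  positivity

lemma neg_norm_div_two_le_neg_abs_inner_div_two_mul_norm (r d : E) :
    -‖d‖ / 2 ≤ -|⟪r, d⟫| / (2 * ‖r‖) := by
  rcases eq_or_ne r 0 with rfl | hr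
  · simp only [inner_zero_left, abs_zero, neg_zero, zero_div]
    linarith [norm_nonneg d]
  have hr : 0 < ‖r‖ := norm_pos_iff.2 hr
  rw [div_le_div_iff₀ two_pos (by positivity)]
  nlinarith [abs_real_inner_le_norm r d]

lemma neg_abs_inner_self_div_two_mul_norm (d : E) :
    -|⟪d, d⟫| / (2 * ‖d‖) = -‖d‖ / 2 := by
  rcases eq_or_ne d 0 with rfl | hd
  · simp
  rw [real_inner_self_eq_norm_sq, abs_of_nonneg (sq_nonneg _)]
  field_simp [norm_ne_zero_iff.2 hd]

end InnerProductSpace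

/-- (Simplified version with `Σ = I` and equal priors.) The optimal-threshold TARP error
`ε(r) = Φ(−|r·d|/(2‖r‖))` is continuous away from `0`, attains its minimum (the Bayes error
`Φ(−‖d‖/2)`) in the direction `d = μ₂ − μ₁`, and `ε(rₙ) → Bayes error` whenever `rₙ → d`. -/
theorem tarp_error_continuous_min (p : ℕ) (μ1 μ2 : EuclideanSpace ℝ (Fin p))
    (hμ : μ1 ≠ μ2) :
    letI d := μ2 - μ1
    letI ε : EuclideanSpace ℝ (Fin p) → ℝ :=
      fun r => stdNormalCDF (-|⟪r, d⟫| / (2 * ‖r‖))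
    ContinuousOn ε {0}ᶜ ∧
    (∀ r : EuclideanSpace ℝ (Fin p), r ≠ 0 → ε d ≤ ε r) ∧
    ε d = stdNormalCDF (-‖d‖ / 2) ∧
    ∀ rn : ℕ → EuclideanSpace ℝ (Fin p), (∀ n, rn n ≠ 0) →
      Tendsto rn atTop (nhds d) →
      Tendsto (fun n => ε (rn n)) atTop (nhds (stdNormalCDF (-‖d‖ / 2))) := by
  set d := μ2 - μ1
  set ε : EuclideanSpace ℝ (Fin p) → ℝ := fun r => stdNormalCDF (-|⟪r, d⟫| / (2 * ‖r‖))
  have hcont : ContinuousOn ε {0}ᶜ :=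
    continuous_stdNormalCDF.comp_continuousOn (continuousOn_neg_abs_inner_div_two_mul_norm d)
  have hεd : ε d = stdNormalCDF (-‖d‖ / 2) :=
    congrArg stdNormalCDF (neg_abs_inner_self_div_two_mul_norm d)
  have hd : d ≠ 0 := sub_ne_zero.2 hμ.symm
  refine ⟨hcont, fun r _ => ?_, hεd, fun rn _ hrn => ?_⟩
  · exact hεd ▸ monotone_stdNormalCDF (neg_norm_div_two_le_neg_abs_inner_div_two_mul_norm r d)
  · rw [← hεd]
    exact (hcont.continuousAt (isOpen_compl_singleton.mem_nhds hd)).tendsto.comp hrn
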